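/- arXiv:1605.00268 — 6 statements merged into one kernel-verified Lean document; each statement's English description precedes it below -/
import Mathlib

section
/- The q-deformed Witt superalgebra W^q, with even basis {L_n : n ∈ ℤ}, odd basis {G_n : n ∈ ℤ}, brackets [L_n, L_m] = ({m}-{n}) L_{n+m}, [L_n, G_m] = ({m+1}-{n}) G_{n+m}, [G_n, G_m] = 0, and twist map α(L_n) = (1+q^n) L_n, α(G_n) = (1+q^{n+1}) G_n, is a Hom-Lie superalgebra: the bracket is super-skew-symmetric and satisfies the super Hom-Jacobi identity (-1)^{|x||z|}[α(x),[y,z]] + (-1)^{|z||y|}[α(z),[x,y]] + (-1)^{|y||x|}[α(y),[z,x]] = 0 for homogeneous x, y, z. -/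
noncomputable section

/-- The `q`-number `{m} = (1-q^m)/(1-q)`. -/
def qn (q : ℂ) (m : ℤ) : ℂ := (1 - q ^ m) / (1 - q)

/-- The `q`-deformed Witt superalgebra `W^q`, with even basis indexed by `Sum.inl n`
(the `L_n`) and odd basis indexed by `Sum.inr n` (the `G_n`). -/
abbrev Wq : Type := (ℤ ⊕ ℤ) →₀ ℂ

def L (n : ℤ) : Wq := Finsupp.single (Sum.inl n) 1
def G (n : ℤ) : Wq := Finsupp.single (Sum.inr n) 1

/-- Bracket of `W^q` on basis elements:
`[L_n, L_m] = ({m}-{n}) L_{n+m}`, `[L_n, G_m] = ({m+1}-{n}) G_{n+m}`,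
`[G_m, L_n] = -[L_n, G_m]`, `[G_n, G_m] = 0`. -/
def brBasis (q : ℂ) : ℤ ⊕ ℤ → ℤ ⊕ ℤ → Wq
  | Sum.inl n, Sum.inl m => (qn q m - qn q n) • L (n + m)
  | Sum.inl n, Sum.inr m => (qn q (m + 1) - qn q n) • G (n + m)
  | Sum.inr m, Sum.inl n => -((qn q (m + 1) - qn q n) • G (n + m))
  | Sum.inr _, Sum.inr _ => 0

/-- The bilinear extension of the bracket to `W^q`. -/
def br (q : ℂ) (x y : Wq) : Wq :=
  x.sum fun a ca => y.sum fun b cb => (ca * cb) • brBasis q a b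

/-- The twist map `α(L_n) = (1+q^n) L_n`, `α(G_n) = (1+q^{n+1}) G_n`. -/
def alphaW (q : ℂ) (x : Wq) : Wq :=
  x.sum fun a ca =>
    match a with
    | Sum.inl n => (ca * (1 + q ^ n)) • L n
    | Sum.inr n => (ca * (1 + q ^ (n + 1))) • G n

/-- `par false x`: `x` is even (supported on the `L_n`);
`par true x`: `x` is odd (supported on the `G_n`). -/
def par (i : Bool) (x : Wq) : Prop :=
  if i then ∀ n, x (Sum.inl n) = 0 else ∀ n, x (Sum.inr n) = 0

/-- The sign `(-1)^{ij}` for parities `i, j`. -/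
def sB (i j : Bool) : ℂ := if i && j then -1 else 1

end


/-! Both identities are linear in each argument, and an element of parity `i` is a combination
of basis vectors of parity `i`, so it suffices to check them on the basis `L_n`, `G_n`. There
super-skew-symmetry is read off the bracket table, and in each of the eight parity patterns the
super Hom-Jacobi identity becomes a polynomial identity in `q^n`, `q^m`, `q^k` and `(1-q)⁻¹`. -/

open Finsupp

section Supported

variable {ι R M : Type*} [CommSemiring R] [AddCommMonoid M] [Module R M]

theorem Finsupp.map_eq_zero_of_mem_supported (f : (ι →₀ R) →ₗ[R] M) {s : Set ι}
    (hf : ∀ a ∈ s, f (single a 1) = 0) {x : ι →₀ R} (hx : x ∈ supported R R s) : f x = 0 := by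
  rw [supported_eq_span_single] at hx
  exact LinearMap.eqOn_span' (g := 0) (by rintro _ ⟨a, ha, rfl⟩; exact hf a ha) hx

theorem Finsupp.map₂_eq_zero_of_mem_supported (B : (ι →₀ R) →ₗ[R] (ι →₀ R) →ₗ[R] M)
    {s t : Set ι} (hB : ∀ a ∈ s, ∀ b ∈ t, B (single a 1) (single b 1) = 0)
    {x y : ι →₀ R} (hx : x ∈ supported R R s) (hy : y ∈ supported R R t) : B x y = 0 :=
  map_eq_zero_of_mem_supported (B.flip y)
    (fun a ha => map_eq_zero_of_mem_supported (B (single a 1)) (hB a ha) hy) hx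

theorem Finsupp.map₃_eq_zero_of_mem_supported
    (T : (ι →₀ R) →ₗ[R] (ι →₀ R) →ₗ[R] (ι →₀ R) →ₗ[R] M) {s t u : Set ι}
    (hT : ∀ a ∈ s, ∀ b ∈ t, ∀ c ∈ u, T (single a 1) (single b 1) (single c 1) = 0)
    {x y z : ι →₀ R} (hx : x ∈ supported R R s) (hy : y ∈ supported R R t)
    (hz : z ∈ supported R R u) : T x y z = 0 :=
  map_eq_zero_of_mem_supported ((T.flip y).flip z)
    (fun a ha => map₂_eq_zero_of_mem_supported (T (single a 1)) (hT a ha) hy hz) hx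

end Supported

section Jacobiator

variable {R M : Type*} [CommSemiring R] [AddCommMonoid M] [Module R M]

def superHomJacobiator (B : M →ₗ[R] M →ₗ[R] M) (α : M →ₗ[R] M) (ε₁ ε₂ ε₃ : R) :
    M →ₗ[R] M →ₗ[R] M →ₗ[R] M :=
  LinearMap.mk₂ R
    (fun x y => ε₁ • (B (α x) ∘ₗ B y) + ε₂ • (B.flip (B x y) ∘ₗ α) + ε₃ • (B (α y) ∘ₗ B.flip x))
    (fun x x' y => by ext z; simp; abel)
    (fun c x y => by ext z; simp [smul_comm c])
    (fun x y y' => by ext z; simp; abel)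
    (fun c x y => by ext z; simp [smul_comm c])

@[simp]
theorem superHomJacobiator_apply (B : M →ₗ[R] M →ₗ[R] M) (α : M →ₗ[R] M) (ε₁ ε₂ ε₃ : R)
    (x y z : M) :
    superHomJacobiator B α ε₁ ε₂ ε₃ x y z =
      ε₁ • B (α x) (B y z) + ε₂ • B (α z) (B x y) + ε₃ • B (α y) (B z x) :=
  rfl

end Jacobiator

noncomputable section Bracket

def bracket (q : ℂ) : Wq →ₗ[ℂ] Wq →ₗ[ℂ] Wq :=
  linearCombination ℂ fun a => linearCombination ℂ (brBasis q a)

theorem br_eq_bracket (q : ℂ) (x y : Wq) : br q x y = bracket q x y := by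
  simp only [br, bracket, linearCombination_apply, LinearMap.finsupp_sum_apply,
    LinearMap.smul_apply, Finsupp.smul_sum, smul_smul]

@[simp]
theorem bracket_single_single (q : ℂ) (a b : ℤ ⊕ ℤ) :
    bracket q (single a 1) (single b 1) = brBasis q a b := by
  simp [bracket]

def twistCoeff (q : ℂ) : ℤ ⊕ ℤ → ℂ
  | Sum.inl n => 1 + q ^ n
  | Sum.inr n => 1 + q ^ (n + 1)

def twist (q : ℂ) : Wq →ₗ[ℂ] Wq :=
  linearCombination ℂ fun a => single a (twistCoeff q a)

theorem alphaW_eq_twist (q : ℂ) (x : Wq) : alphaW q x = twist q x := by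
  simp only [alphaW, twist, linearCombination_apply]
  refine sum_congr fun a _ => ?_
  cases a <;> simp only [twistCoeff, L, G, smul_single, smul_eq_mul, mul_one]

@[simp]
theorem twist_single (q : ℂ) (a : ℤ ⊕ ℤ) : twist q (single a 1) = twistCoeff q a • single a 1 := by
  simp [twist]

end Bracket

theorem par_iff_mem_supported {i : Bool} {x : Wq} :
    par i x ↔ x ∈ supported ℂ ℂ {a | a.isRight = i} := by
  cases i <;> simp [par, mem_supported']

theorem brBasis_swap (q : ℂ) (a b : ℤ ⊕ ℤ) :
    brBasis q a b = -(sB a.isRight b.isRight) • brBasis q b a := by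
  rcases a with n | n <;> rcases b with m | m <;>
    simp only [brBasis, sB, Sum.isRight_inl, Sum.isRight_inr, Bool.true_and, Bool.false_and,
      Bool.false_eq_true, ↓reduceIte, Int.add_comm m n] <;>
    module

theorem superHomJacobiator_single (q : ℂ) (hq0 : q ≠ 0) (a b c : ℤ ⊕ ℤ) :
    superHomJacobiator (bracket q) (twist q) (sB a.isRight c.isRight) (sB c.isRight b.isRight)
      (sB b.isRight a.isRight) (single a 1) (single b 1) (single c 1) = 0 := by
  rcases a with n | n <;> rcases b with m | m <;> rcases c with k | k <;>
    simp only [superHomJacobiator_apply, twist_single, twistCoeff, sB, Sum.isRight_inl,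
      Sum.isRight_inr, Bool.true_and, Bool.false_and, Bool.false_eq_true, ↓reduceIte,
      map_smul, map_neg, map_zero, LinearMap.smul_apply, bracket_single_single, brBasis, L, G,
      smul_zero, neg_zero, add_zero] <;>
    simp only [qn, zpow_add₀ hq0, zpow_one, Int.add_comm, Int.add_left_comm, Int.add_assoc] <;>
    module

theorem br_eq_neg_smul_br_of_par (q : ℂ) {i j : Bool} {x y : Wq} (hx : par i x) (hy : par j y) :
    br q x y = -(sB i j) • br q y x := by
  rw [neg_smul, eq_neg_iff_add_eq_zero, br_eq_bracket, br_eq_bracket]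
  refine map₂_eq_zero_of_mem_supported (bracket q + sB i j • (bracket q).flip) ?_
    (par_iff_mem_supported.mp hx) (par_iff_mem_supported.mp hy)
  rintro a rfl b rfl
  simp [brBasis_swap q a b]

theorem superHomJacobi_of_par (q : ℂ) (hq0 : q ≠ 0) {i j k : Bool} {x y z : Wq}
    (hx : par i x) (hy : par j y) (hz : par k z) :
    sB i k • br q (alphaW q x) (br q y z) + sB k j • br q (alphaW q z) (br q x y)
      + sB j i • br q (alphaW q y) (br q z x) = 0 := by
  simp only [br_eq_bracket, alphaW_eq_twist]
  refine map₃_eq_zero_of_mem_supported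
    (superHomJacobiator (bracket q) (twist q) (sB i k) (sB k j) (sB j i)) ?_
    (par_iff_mem_supported.mp hx) (par_iff_mem_supported.mp hy) (par_iff_mem_supported.mp hz)
  rintro a rfl b rfl c rfl
  exact superHomJacobiator_single q hq0 a b c

theorem stmt1_general (q : ℂ) (hq0 : q ≠ 0) :
    (∀ (i j : Bool) (x y : Wq), par i x → par j y →
      br q x y = -(sB i j) • br q y x) ∧
    (∀ (i j k : Bool) (x y z : Wq), par i x → par j y → par k z →
      sB i k • br q (alphaW q x) (br q y z)
        + sB k j • br q (alphaW q z) (br q x y)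
        + sB j i • br q (alphaW q y) (br q z x) = 0) :=
  ⟨fun _ _ _ _ => br_eq_neg_smul_br_of_par q,
    fun _ _ _ _ _ _ => superHomJacobi_of_par q hq0⟩

/-- `W^q` is a Hom-Lie superalgebra: super-skew-symmetry and the super
Hom-Jacobi identity hold for homogeneous elements. -/
theorem stmt1 (q : ℂ) (hq0 : q ≠ 0) (hq1 : q ≠ 1) :
    (∀ (i j : Bool) (x y : Wq), par i x → par j y →
      br q x y = -(sB i j) • br q y x) ∧
    (∀ (i j k : Bool) (x y z : Wq), par i x → par j y → par k z →
      sB i k • br q (alphaW q x) (br q y z)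
        + sB k j • br q (alphaW q z) (br q x y)
        + sB j i • br q (alphaW q y) (br q z x) = 0) :=
  stmt1_general q hq0
end

section
/- Let (G, [·,·], α) be a Hom-Lie superalgebra with adjoint-type coboundary operators δ¹ and δ² defined by δ¹(f)(x,y) = -f([x,y]) + (-1)^{|x||f|}[x, f(y)] - (-1)^{|y|(|f|+|x|)}[y, f(x)] and δ²(f)(x,y,z) = -f([x,y], α(z)) + (-1)^{|z||y|} f([x,z], α(y)) + f(α(x), [y,z]) + (-1)^{|x||f|}[α(x), f(y,z)] - (-1)^{|y|(|f|+|x|)}[α(y), f(x,z)] + (-1)^{|z|(|f|+|x|+|y|)}[α(z), f(x,y)]. Then for every homogeneous linear map f : G → G satisfying f ∘ α = α ∘ f, one has δ² ∘ δ¹(f) = 0. -/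
/-!
Expanding `δ²(δ¹ f)(x, y, z)`, the terms in which `f` is applied to a double bracket add up to
`f` of the Hom-Jacobiator of `(x, y, z)`; once `f ∘ α = α ∘ f` is used, the terms
`[α u, [v, f w]]` add up to the Hom-Jacobiators of `(f x, y, z)`, `(x, f y, z)` and
`(x, y, f z)`; the remaining terms `[α u, f [v, w]]` cancel in pairs. Hence `δ²(δ¹ f)` is a
combination of Hom-Jacobiators, which vanish by the super Hom-Jacobi identity.
-/

/-- The sign `(-1)^{ij}` for parities `i, j ∈ ℤ/2`. -/
noncomputable def m1 (i j : ZMod 2) : ℂ := (-1 : ℂ) ^ (i.val * j.val)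

/-- The coboundary `δ¹(f)(x,y) = -f([x,y]) + (-1)^{|x||f|}[x,f(y)] - (-1)^{|y|(|f|+|x|)}[y,f(x)]`,
for arguments of parities `px, py` and `f` of parity `pf`. -/
noncomputable def d1 {V : Type*} [AddCommGroup V] [Module ℂ V]
    (br : V →ₗ[ℂ] V →ₗ[ℂ] V) (f : V →ₗ[ℂ] V) (pf : ZMod 2)
    (px py : ZMod 2) (a b : V) : V :=
  -f (br a b) + m1 px pf • br a (f b) - m1 py (pf + px) • br b (f a)

lemma zmod2_eq_zero_or_eq_one (i : ZMod 2) : i = 0 ∨ i = 1 := by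
  revert i; decide

@[simp] lemma m1_zero_left (j : ZMod 2) : m1 0 j = 1 := by simp [m1]

@[simp] lemma m1_zero_right (i : ZMod 2) : m1 i 0 = 1 := by simp [m1]

@[simp] lemma m1_one_one : m1 1 1 = -1 := by simp [m1, ZMod.val_one]

section

variable {V : Type*} [AddCommGroup V] [Module ℂ V]

/-- `δ²` of a 2-cochain of parity `pφ`; as in `d1`, the parities of the arguments are passed
explicitly, so the cochain is `φ px py`. -/
noncomputable def d2 (br : V →ₗ[ℂ] V →ₗ[ℂ] V) (α : V →ₗ[ℂ] V)
    (φ : ZMod 2 → ZMod 2 → V → V → V) (pφ : ZMod 2) (i j k : ZMod 2) (x y z : V) : V :=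
  -φ (i + j) k (br x y) (α z) + m1 k j • φ (i + k) j (br x z) (α y) + φ i (j + k) (α x) (br y z)
    + m1 i pφ • br (α x) (φ j k y z) - m1 j (pφ + i) • br (α y) (φ i k x z)
    + m1 k (pφ + i + j) • br (α z) (φ i j x y)

noncomputable def homJacobiator (br : V →ₗ[ℂ] V →ₗ[ℂ] V) (α : V →ₗ[ℂ] V) (i j k : ZMod 2)
    (x y z : V) : V :=
  m1 i k • br (α x) (br y z) + m1 k j • br (α z) (br x y) + m1 j i • br (α y) (br z x)

theorem d2_d1_eq_homJacobiator_combination (g : ZMod 2 → Submodule ℂ V)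
    (br : V →ₗ[ℂ] V →ₗ[ℂ] V) (α : V →ₗ[ℂ] V)
    (hgbr : ∀ {i j : ZMod 2} {x y : V}, x ∈ g i → y ∈ g j → br x y ∈ g (i + j))
    (hga : ∀ {i : ZMod 2} {x : V}, x ∈ g i → α x ∈ g i)
    (hskew : ∀ {i j : ZMod 2} {x y : V}, x ∈ g i → y ∈ g j → br x y = -(m1 i j) • br y x)
    (f : V →ₗ[ℂ] V) (pf : ZMod 2) (hf : ∀ {i : ZMod 2} {x : V}, x ∈ g i → f x ∈ g (i + pf))
    (hfα : f ∘ₗ α = α ∘ₗ f) {i j k : ZMod 2} {x y z : V}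
    (hx : x ∈ g i) (hy : y ∈ g j) (hz : z ∈ g k) :
    d2 br α (d1 br f pf) pf i j k x y z =
      -(m1 i k) • f (homJacobiator br α i j k x y z)
        + (m1 i k * m1 j pf) • homJacobiator br α i j (k + pf) x y (f z)
        + (m1 i k * m1 i pf) • homJacobiator br α i (j + pf) k x (f y) z
        + m1 (i + pf) k • homJacobiator br α (i + pf) j k (f x) y z := by
  have hfα_apply (v : V) : f (α v) = α (f v) := LinearMap.congr_fun hfα v
  have hxy := hgbr hx hy
  have hxz := hgbr hx hz
  have hyz := hgbr hy hz
  have hfx := hf hx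
  have hfy := hf hy
  have hfz := hf hz
  simp only [d2, d1, homJacobiator, hfα_apply]
  -- orient every bracket in one way, so that both sides become combinations of the same terms
  rw [hskew hxy (hga hz), hskew hxz (hga hy), hskew hyz (hga hfx), hskew hxy (hga hfz),
    hskew hxz (hga hfy), hskew hz hfy, hskew hz hx, hskew hfz hx, hskew hfx hy]
  simp only [map_add, map_sub, map_neg, map_smul, smul_add, smul_sub,
    smul_neg, neg_smul, neg_neg, smul_smul]
  match_scalars <;>
    rcases zmod2_eq_zero_or_eq_one i with rfl | rfl <;>
    rcases zmod2_eq_zero_or_eq_one j with rfl | rfl <;>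
    rcases zmod2_eq_zero_or_eq_one k with rfl | rfl <;>
    rcases zmod2_eq_zero_or_eq_one pf with rfl | rfl <;>
    simp [CharTwo.add_self_eq_zero]

end

/-- For a Hom-Lie superalgebra `(G, [·,·], α)` and a homogeneous linear map
`f : G → G` commuting with `α`, one has `δ² (δ¹ f) = 0` on homogeneous elements. -/
theorem stmt2 {V : Type*} [AddCommGroup V] [Module ℂ V]
    (g : ZMod 2 → Submodule ℂ V)
    (br : V →ₗ[ℂ] V →ₗ[ℂ] V) (α : V →ₗ[ℂ] V)
    (hgbr : ∀ {i j : ZMod 2} {x y : V}, x ∈ g i → y ∈ g j → br x y ∈ g (i + j))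
    (hga : ∀ {i : ZMod 2} {x : V}, x ∈ g i → α x ∈ g i)
    (hskew : ∀ {i j : ZMod 2} {x y : V}, x ∈ g i → y ∈ g j →
      br x y = -(m1 i j) • br y x)
    (hjac : ∀ {i j k : ZMod 2} {x y z : V}, x ∈ g i → y ∈ g j → z ∈ g k →
      m1 i k • br (α x) (br y z) + m1 k j • br (α z) (br x y)
        + m1 j i • br (α y) (br z x) = 0)
    (f : V →ₗ[ℂ] V) (pf : ZMod 2)
    (hf : ∀ {i : ZMod 2} {x : V}, x ∈ g i → f x ∈ g (i + pf))
    (hfα : f ∘ₗ α = α ∘ₗ f) :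
    ∀ (i j k : ZMod 2) (x y z : V), x ∈ g i → y ∈ g j → z ∈ g k →
      -d1 br f pf (i + j) k (br x y) (α z)
        + m1 k j • d1 br f pf (i + k) j (br x z) (α y)
        + d1 br f pf i (j + k) (α x) (br y z)
        + m1 i pf • br (α x) (d1 br f pf j k y z)
        - m1 j (pf + i) • br (α y) (d1 br f pf i k x z)
        + m1 k (pf + i + j) • br (α z) (d1 br f pf i j x y) = 0 := by
  intro i j k x y z hx hy hz
  refine (d2_d1_eq_homJacobiator_combination g br α hgbr hga hskew f pf hf hfα hx hy hz).trans ?_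
  simp only [homJacobiator, hjac hx hy hz, hjac hx hy (hf hz), hjac hx (hf hy) hz,
    hjac (hf hx) hy hz, map_zero, smul_zero, add_zero]
end

section
/- For q ∈ ℂ with q ≠ 0, 1, define b_n = (1/q^{n-2}) · (1+q²)/(1+q^n) · ({n+1}{n}{n-1})/({3}{2}) for n ≥ 0 and b_n = -b_{-n} for n < 0 (assuming 1+q^n ≠ 0 for all n). Then the bilinear map φ_0 on the q-Witt superalgebra defined by φ_0(L_n, L_p) = b_n δ_{n+p,0}, φ_0(L_n, G_k) = φ_0(G_m, L_p) = φ_0(G_m, G_k) = 0, is a scalar 2-cocycle: for all n, m, p with n+m+p = 0, (1+q^n)({p}-{m}) b_n - (1+q^m)({p}-{n}) b_m + (1+q^p)({m}-{n}) b_p = 0. -/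
/-!
With `x = q ^ n`, the weighted coefficient `(1 + q ^ n) b_n` is a fixed scalar times the Laurent
polynomial `g x = (1 - q x)(1 - x)(q - x) / x`; for `n < 0` this rests on `g x⁻¹ = -g x / x`, which
matches the oddness `b_{-n} = -b_n`. Since `{a} - {b} = (q ^ b - q ^ a) / (1 - q)`, the cocycle
identity becomes `g x (y - z) - g y (x - z) + g z (x - y) = 0` for `x y z = 1`. Now
`g x = q (1 / x - x ^ 2) + (1 + q + q ^ 2)(x - 1)`: the affine part cancels trivially, and on
`x y z = 1` the part `1 / x - x ^ 2 = y z - x ^ 2` cancels by the Vandermonde identity.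
-/

noncomputable section

/-- `b_n` for `n ≥ 0`. -/
def bpos (q : ℂ) (n : ℤ) : ℂ :=
  (1 / q ^ (n - 2)) * ((1 + q ^ (2 : ℤ)) / (1 + q ^ n)) *
    (qn q (n + 1) * qn q n * qn q (n - 1) / (qn q 3 * qn q 2))

/-- The coefficients `b_n` of the cocycle `φ₀`: `b_n` as above for `n ≥ 0`,
and `b_n = -b_{-n}` for `n < 0`. -/
def bcoef (q : ℂ) (n : ℤ) : ℂ := if 0 ≤ n then bpos q n else -bpos q (-n)

end

noncomputable def bScale (q : ℂ) : ℂ := q * (1 + q ^ 2) / ((1 - q) * (1 - q ^ 2) * (1 - q ^ 3))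

noncomputable def bLaurent (q x : ℂ) : ℂ := (1 - q * x) * (1 - x) * (q - x) / x

-- Where `(1 - q)(1 - q²)(1 - q³)` vanishes, division by zero makes both sides `0`.
theorem one_add_zpow_mul_bpos {q : ℂ} (hq0 : q ≠ 0) {n : ℤ} (hn : 1 + q ^ n ≠ 0) :
    (1 + q ^ n) * bpos q n = bScale q * bLaurent q (q ^ n) := by
  have hx : q ^ n ≠ 0 := zpow_ne_zero n hq0
  unfold bpos qn bScale bLaurent
  simp only [zpow_add₀ hq0, zpow_sub₀ hq0, zpow_ofNat]
  generalize q ^ n = x at *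
  field_simp

theorem one_add_zpow_mul_bcoef {q : ℂ} (hq0 : q ≠ 0) (hden : ∀ n : ℤ, 1 + q ^ n ≠ 0) (n : ℤ) :
    (1 + q ^ n) * bcoef q n = bScale q * bLaurent q (q ^ n) := by
  unfold bcoef
  split_ifs
  · exact one_add_zpow_mul_bpos hq0 (hden n)
  · have hx : q ^ n ≠ 0 := zpow_ne_zero n hq0
    have key := one_add_zpow_mul_bpos hq0 (hden (-n))
    have hinv := hden (-n)
    rw [zpow_neg] at key hinv
    generalize bpos q (-n) = b at *
    generalize q ^ n = x at *
    unfold bLaurent at *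
    field_simp at key ⊢
    linear_combination -key

theorem bLaurent_cocycle (q : ℂ) {x y z : ℂ} (hx : x ≠ 0) (hy : y ≠ 0) (hz : z ≠ 0)
    (h : x * y * z = 1) :
    bLaurent q x * (y - z) - bLaurent q y * (x - z) + bLaurent q z * (x - y) = 0 := by
  unfold bLaurent
  field_simp
  linear_combination q * (x * y ^ 2 - x ^ 2 * y - z * y ^ 2 + z * x ^ 2 + z ^ 2 * y - z ^ 2 * x) * h

theorem stmt5_general (q : ℂ) (hq0 : q ≠ 0)
    (hden : ∀ n : ℤ, 1 + q ^ n ≠ 0)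
    (n m p : ℤ) (h : n + m + p = 0) :
    (1 + q ^ n) * (qn q p - qn q m) * bcoef q n
      - (1 + q ^ m) * (qn q p - qn q n) * bcoef q m
      + (1 + q ^ p) * (qn q m - qn q n) * bcoef q p = 0 := by
  have hprod : q ^ n * q ^ m * q ^ p = 1 := by
    rw [← zpow_add₀ hq0, ← zpow_add₀ hq0, h, zpow_zero]
  have hcocycle := bLaurent_cocycle q (zpow_ne_zero n hq0) (zpow_ne_zero m hq0)
    (zpow_ne_zero p hq0) hprod
  have hb := one_add_zpow_mul_bcoef hq0 hden
  unfold qn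
  linear_combination (q ^ m - q ^ p) / (1 - q) * hb n - (q ^ n - q ^ p) / (1 - q) * hb m
    + (q ^ n - q ^ m) / (1 - q) * hb p + bScale q / (1 - q) * hcocycle

/-- `φ₀(L_n, L_p) = b_n δ_{n+p,0}` is a scalar `2`-cocycle on `W^q`: its `L`-`L`-`L`
cocycle condition for `n + m + p = 0`. -/
theorem stmt5 (q : ℂ) (hq0 : q ≠ 0) (hq1 : q ≠ 1)
    (hden : ∀ n : ℤ, 1 + q ^ n ≠ 0)
    (n m p : ℤ) (h : n + m + p = 0) :
    (1 + q ^ n) * (qn q p - qn q m) * bcoef q n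
      - (1 + q ^ m) * (qn q p - qn q n) * bcoef q m
      + (1 + q ^ p) * (qn q m - qn q n) * bcoef q p = 0 :=
  stmt5_general q hq0 hden n m p h
end

section
/- The odd map D_3 defined on the q-deformed Witt superalgebra by D_3(L_n) = n G_{n-1} and D_3(G_n) = 0 is an odd α⁰-derivation: D_3([x,y]) = [D_3(x), y] + (-1)^{|x|}[x, D_3(y)] for all homogeneous x, y ∈ W^q. -/
/-- The odd map `D_3 : L_n ↦ n G_{n-1}, G_n ↦ 0`. -/
noncomputable def D3 (x : Wq) : Wq :=
  x.sum fun a c =>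
    match a with
    | Sum.inl n => (c * (n : ℂ)) • G (n - 1)
    | Sum.inr _ => 0

/-! On basis elements the Leibniz rule holds without any sign: the only nontrivial case is
`[L_n, L_m]`, where `[G_{n-1}, L_m] = -({n}-{m}) G_{n+m-1}` makes both sides
`(n + m)({m}-{n}) G_{n+m-1}`. For odd `x` the sign is irrelevant, because `D_3 y` is odd and the
bracket of two odd elements vanishes. -/

open Finsupp

lemma D3_zero : D3 0 = 0 := sum_zero_index

lemma D3_add (x y : Wq) : D3 (x + y) = D3 x + D3 y := by
  unfold D3
  apply sum_add_index'
  · rintro (n | n) <;> simp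
  · rintro (n | n) c d <;> simp [add_mul, add_smul]

lemma D3_single_inl (n : ℤ) (c : ℂ) :
    D3 (single (Sum.inl n) c) = single (Sum.inr (n - 1)) (c * n) := by
  simp [D3, G, smul_single]

lemma D3_single_inr (n : ℤ) (c : ℂ) : D3 (single (Sum.inr n) c) = 0 := by
  simp [D3]

lemma par_true_D3 (x : Wq) : par true (D3 x) := fun n => by
  rw [D3, Finsupp.sum_apply]
  refine Finset.sum_eq_zero ?_
  rintro (m | m) _ <;> simp [G, smul_single]

lemma br_zero_left (q : ℂ) (y : Wq) : br q 0 y = 0 := sum_zero_index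

lemma br_zero_right (q : ℂ) (x : Wq) : br q x 0 = 0 := by
  simp [br]

lemma br_add_left (q : ℂ) (x x' y : Wq) : br q (x + x') y = br q x y + br q x' y := by
  unfold br
  apply sum_add_index'
  · intro a
    simp
  · intro a c c'
    rw [← sum_add]
    exact sum_congr fun b _ => by simp [add_mul, add_smul]

lemma br_add_right (q : ℂ) (x y y' : Wq) : br q x (y + y') = br q x y + br q x y' := by
  unfold br
  rw [← sum_add]
  refine sum_congr fun a _ => sum_add_index' (fun b => by simp) fun b c c' => ?_
  simp [mul_add, add_smul]

lemma br_single_single (q : ℂ) (a b : ℤ ⊕ ℤ) (c d : ℂ) :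
    br q (single a c) (single b d) = (c * d) • brBasis q a b := by
  simp [br]

lemma br_eq_zero_of_par_true (q : ℂ) {x y : Wq} (hx : par true x) (hy : par true y) :
    br q x y = 0 := by
  refine Finset.sum_eq_zero fun a ha => Finset.sum_eq_zero fun b hb => ?_
  rcases a with n | n
  · exact absurd (hx n) (mem_support_iff.mp ha)
  rcases b with m | m
  · exact absurd (hy m) (mem_support_iff.mp hb)
  simp [brBasis]

lemma D3_br_single_single (q : ℂ) (a b : ℤ ⊕ ℤ) (c d : ℂ) :
    D3 (br q (single a c) (single b d)) =
      br q (D3 (single a c)) (single b d) + br q (single a c) (D3 (single b d)) := by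
  rcases a with n | n <;> rcases b with m | m <;>
    simp only [br_single_single, D3_zero, D3_single_inl, D3_single_inr, br_zero_left,
      br_zero_right, brBasis, L, G, smul_single, smul_zero, smul_eq_mul, mul_one, ← single_neg,
      add_zero]
  rw [show m + (n - 1) = n + m - 1 by ring, show n + (m - 1) = n + m - 1 by ring, ← single_add,
    sub_add_cancel, sub_add_cancel]
  congr 1
  push_cast
  ring

theorem D3_br (q : ℂ) (x y : Wq) : D3 (br q x y) = br q (D3 x) y + br q x (D3 y) := by
  induction x using induction_linear with
  | zero => simp only [br_zero_left, D3_zero, add_zero]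
  | add x x' hx hx' =>
    rw [br_add_left, D3_add, D3_add, br_add_left, br_add_left, hx, hx']
    abel
  | single a c =>
    induction y using induction_linear with
    | zero => simp only [br_zero_right, D3_zero, zero_add]
    | add y y' hy hy' =>
      rw [br_add_right, D3_add, D3_add, br_add_right, br_add_right, hy, hy']
      abel
    | single b d => exact D3_br_single_single q a b c d

theorem stmt9_general (q : ℂ) :
    ∀ (i j : Bool) (x y : Wq), par i x → par j y →
      D3 (br q x y) = br q (D3 x) y + (if i then (-1 : ℂ) else 1) • br q x (D3 y) := by
  intro i _ x y hx _
  cases i with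
  | false => simpa using D3_br q x y
  | true => rw [D3_br, br_eq_zero_of_par_true q hx (par_true_D3 y), smul_zero]

/-- `D_3` is an odd `α⁰`-derivation of `W^q`:
`D_3([x,y]) = [D_3 x, y] + (-1)^{|x|} [x, D_3 y]` for homogeneous `x, y`. -/
theorem stmt9 (q : ℂ) (hq0 : q ≠ 0) (hq1 : q ≠ 1) :
    ∀ (i j : Bool) (x y : Wq), par i x → par j y →
      D3 (br q x y) = br q (D3 x) y + (if i then (-1 : ℂ) else 1) • br q x (D3 y) :=
  stmt9_general q
end

section
/- An element x = Σ c_n L_n + Σ d_n G_n of the q-deformed Witt superalgebra (finite sums) satisfying [x, L_m] = 0 for all m ∈ ℤ and [x, G_m] = 0 for all m ∈ ℤ must be zero; i.e., the center of W^q is trivial. -/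
lemma brInnerSum (q : ℂ) (m : ℤ) (a : ℤ ⊕ ℤ) (ca : ℂ) :
    ((L m).sum fun b cb => (ca * cb) • brBasis q a b) = ca • brBasis q a (Sum.inl m) := by
  rw [L, Finsupp.sum_single_index] <;> simp

lemma aux1 (q : ℂ) (x : Wq) (m n : ℤ) :
    br q x (L m) (Sum.inl (n + m)) = x (Sum.inl n) * (qn q m - qn q n) := by
  rw [br]
  simp only [brInnerSum]
  rw [Finsupp.sum_apply, Finsupp.sum]
  rw [Finset.sum_eq_single (Sum.inl n : ℤ ⊕ ℤ)]
  · simp [brBasis, L, Finsupp.single_apply, mul_comm]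
  · rintro (k | k) hk hne
    · simp only [brBasis, Finsupp.smul_apply, L, Finsupp.smul_single]
      rw [Finsupp.single_apply]
      have hk' : k ≠ n := fun h => hne (by rw [h])
      have : ¬ (Sum.inl (k + m) = (Sum.inl (n + m) : ℤ ⊕ ℤ)) := by
        simp; omega
      simp [this]
    · simp [brBasis, G]
  · intro h
    simp [Finsupp.notMem_support_iff.mp h]

lemma aux2 (q : ℂ) (x : Wq) (m n : ℤ) :
    br q x (L m) (Sum.inr (n + m)) = -(x (Sum.inr n) * (qn q (n + 1) - qn q m)) := by
  rw [br]
  simp only [brInnerSum]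
  rw [Finsupp.sum_apply, Finsupp.sum]
  rw [Finset.sum_eq_single (Sum.inr n : ℤ ⊕ ℤ)]
  · simp [brBasis, G, Finsupp.single_apply, add_comm m n]
    ring
  · rintro (k | k) hk hne
    · simp [brBasis, L]
    · simp only [brBasis, Finsupp.smul_apply, G, Finsupp.smul_single]
      rw [Finsupp.neg_apply, Finsupp.single_apply]
      have hk' : k ≠ n := fun h => hne (by rw [h])
      have : ¬ (Sum.inr (m + k) = (Sum.inr (n + m) : ℤ ⊕ ℤ)) := by
        simp; omega
      simp [this]
  · intro h
    simp [Finsupp.notMem_support_iff.mp h]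

lemma qn_succ_sub (q : ℂ) (hq0 : q ≠ 0) (hq1 : q ≠ 1) (n : ℤ) :
    qn q (n + 1) - qn q n = q ^ n := by
  have h1 : (1 : ℂ) - q ≠ 0 := by
    intro h; apply hq1; linear_combination -h
  rw [qn, qn, div_sub_div_same]
  rw [zpow_add₀ hq0]
  field_simp
  ring

/-- The center of the `q`-deformed Witt superalgebra is trivial: any element
commuting with all `L_m` and all `G_m` is zero. -/
theorem stmt13 (q : ℂ) (hq0 : q ≠ 0) (hq1 : q ≠ 1)
    (hroot : ∀ k : ℤ, k ≠ 0 → q ^ k ≠ 1) :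
    ∀ x : Wq, (∀ m : ℤ, br q x (L m) = 0) → (∀ m : ℤ, br q x (G m) = 0) → x = 0 := by
  intro x h1 _
  ext c
  rcases c with n | n
  · have := aux1 q x (n + 1) n
    rw [h1] at this
    simp only [Finsupp.zero_apply] at this
    have hne : qn q (n + 1) - qn q n ≠ 0 := by
      rw [qn_succ_sub q hq0 hq1]
      exact zpow_ne_zero _ hq0
    have := this.symm
    rcases mul_eq_zero.mp this with h | h
    · simpa using h
    · exact absurd h hne
  · have := aux2 q x (n + 2) n
    rw [h1] at this
    simp only [Finsupp.zero_apply] at this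
    have hne : qn q (n + 1) - qn q (n + 2) ≠ 0 := by
      have : qn q (n + 2) - qn q (n + 1) = q ^ (n + 1) := by
        have := qn_succ_sub q hq0 hq1 (n + 1)
        convert this using 3 <;> ring
      intro h
      have : q ^ (n + 1) = 0 := by rw [← this]; linear_combination -h
      exact zpow_ne_zero _ hq0 this
    have h0 : x (Sum.inr n) * (qn q (n + 1) - qn q (n + 2)) = 0 :=
      neg_eq_zero.mp this.symm
    rcases mul_eq_zero.mp h0 with h | h
    · simpa using h
    · exact absurd h hne
end

section
/- Let (G, [·,·]_0, α_0) be a Hom-Lie superalgebra and suppose [·,·]_t = [·,·]_0 + Σ_{k≥p} t^k [·,·]_k together with α_t = (Σ_{k≥0} a_k t^k) α_0, a_0 = 1, define a one-parameter formal deformation (the twisted Jacobi identity holds in each order of t). Then the lowest-order term [·,·]_p is a 2-cocycle in Z²(G, G) for the adjoint cohomology: ↻_{x,y,z} (-1)^{|x||z|} ( [α_0(x), [y,z]_p]_0 + [α_0(x), [y,z]_0]_p ) = 0. -/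
/-- The lowest-order term `[·,·]_p` of a one-parameter formal deformation
`[·,·]_t = [·,·]₀ + Σ_{k≥p} t^k [·,·]_k`, `α_t = (Σ_k a_k t^k) α₀`, is a
2-cocycle for the adjoint cohomology. -/
theorem stmt18 {V : Type*} [AddCommGroup V] [Module ℂ V]
    (g : ZMod 2 → Submodule ℂ V)
    (b : ℕ → (V →ₗ[ℂ] V →ₗ[ℂ] V)) (α₀ : V →ₗ[ℂ] V) (a : ℕ → ℂ)
    (p : ℕ) (hp : 0 < p) (ha0 : a 0 = 1)
    (hbvanish : ∀ k : ℕ, 0 < k → k < p → b k = 0)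
    -- (G, [·,·]₀, α₀) is a Hom-Lie superalgebra
    (hgbr : ∀ {i j : ZMod 2} {x y : V}, x ∈ g i → y ∈ g j → (b 0) x y ∈ g (i + j))
    (hga : ∀ {i : ZMod 2} {x : V}, x ∈ g i → α₀ x ∈ g i)
    (hskew0 : ∀ {i j : ZMod 2} {x y : V}, x ∈ g i → y ∈ g j →
      (b 0) x y = -(m1 i j) • (b 0) y x)
    -- each [·,·]_k is even and super-skew-symmetric
    (hskew : ∀ (n : ℕ) {i j : ZMod 2} {x y : V}, x ∈ g i → y ∈ g j →
      (b n) x y = -(m1 i j) • (b n) y x)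
    (hgbn : ∀ (n : ℕ) {i j : ZMod 2} {x y : V}, x ∈ g i → y ∈ g j →
      (b n) x y ∈ g (i + j))
    -- the deformed super Hom-Jacobi identity holds in each order of t
    (hdef : ∀ (s : ℕ) (i j k : ZMod 2) (x y z : V),
      x ∈ g i → y ∈ g j → z ∈ g k →
      m1 i k • (∑ c ∈ Finset.range (s + 1), ∑ d ∈ Finset.range (s + 1 - c),
          a d • (b (s - d - c)) (α₀ x) ((b c) y z))
        + m1 k j • (∑ c ∈ Finset.range (s + 1), ∑ d ∈ Finset.range (s + 1 - c),
          a d • (b (s - d - c)) (α₀ z) ((b c) x y))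
        + m1 j i • (∑ c ∈ Finset.range (s + 1), ∑ d ∈ Finset.range (s + 1 - c),
          a d • (b (s - d - c)) (α₀ y) ((b c) z x)) = 0) :
    -- [·,·]_p is a 2-cocycle in Z²(G, G)
    ∀ (i j k : ZMod 2) (x y z : V), x ∈ g i → y ∈ g j → z ∈ g k →
      m1 i k • ((b 0) (α₀ x) ((b p) y z) + (b p) (α₀ x) ((b 0) y z))
        + m1 k j • ((b 0) (α₀ z) ((b p) x y) + (b p) (α₀ z) ((b 0) x y))
        + m1 j i • ((b 0) (α₀ y) ((b p) z x) + (b p) (α₀ y) ((b 0) z x)) = 0 := by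
  intro i j k x y z hx hy hz
  have hsub : ({0, p} : Finset ℕ) ⊆ Finset.range (p + 1) := by
    intro t ht
    simp only [Finset.mem_insert, Finset.mem_singleton] at ht
    simp only [Finset.mem_range]
    omega
  have key : ∀ u v w : V,
      (∑ c ∈ Finset.range (p + 1), ∑ d ∈ Finset.range (p + 1 - c),
        a d • (b (p - d - c)) u ((b c) v w))
      = (b 0) u ((b p) v w) + (b p) u ((b 0) v w) + a p • (b 0) u ((b 0) v w) := by
    intro u v w
    rw [← Finset.sum_subset hsub (by
      intro c hc hc'
      simp only [Finset.mem_insert, Finset.mem_singleton, not_or] at hc'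
      simp only [Finset.mem_range] at hc
      have : b c = 0 := hbvanish c (by omega) (by omega)
      simp [this])]
    rw [Finset.sum_pair hp.ne]
    have hc0 : ∑ d ∈ Finset.range (p + 1 - 0), a d • (b (p - d - 0)) u ((b 0) v w)
        = (b p) u ((b 0) v w) + a p • (b 0) u ((b 0) v w) := by
      simp only [Nat.sub_zero]
      rw [← Finset.sum_subset hsub (by
        intro d hd hd'
        simp only [Finset.mem_insert, Finset.mem_singleton, not_or] at hd'
        simp only [Finset.mem_range] at hd
        have : b (p - d) = 0 := hbvanish _ (by omega) (by omega)
        simp [this])]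
      rw [Finset.sum_pair hp.ne]
      simp [ha0]
    have hr1 : p + 1 - p = 1 := by omega
    have hcp : ∑ d ∈ Finset.range (p + 1 - p), a d • (b (p - d - p)) u ((b p) v w)
        = (b 0) u ((b p) v w) := by
      rw [hr1, Finset.sum_range_one]
      have : p - 0 - p = 0 := by omega
      rw [this, ha0, one_smul]
    rw [hc0, hcp]
    abel
  have h0 := hdef 0 i j k x y z hx hy hz
  simp only [zero_add, Finset.sum_range_one, Nat.sub_self, Nat.sub_zero, ha0, one_smul] at h0
  have h1 := hdef p i j k x y z hx hy hz
  rw [key, key, key] at h1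
  linear_combination (norm := module) h1 - a p • h0
end
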